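/- arXiv:1106.6316 — 6 statements merged into one kernel-verified Lean document; each statement's English description precedes it below -/
import Mathlib

section
/- Let Ω be a second countable Hausdorff space, T a positive strong Feller kernel operator on B_b(Ω), and μ ≠ 0 a positive finite T-invariant Borel measure. Then there exists a μ-null set N ⊂ Ω such that for every sequence (A_n) of Borel sets with μ(A_n) → 0 and every x ∈ Ω \ N, (T²𝟙_{A_n})(x) → 0. -/
/-
For a fixed `x`, the kernel representation gives
`(T²𝟙_B)(x) = ∫ k(x,y) (T𝟙_B)(y) dμ(y)` and `(T𝟙_B)(y) = ∫_B k(y,z) dμ(z)`; the inner integrals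
tend to `0` as `μ(B) → 0` and are bounded by `T𝟙`, so dominated convergence gives `(T²𝟙_{B_m})(x) → 0`.
The kernel representation of `T²𝟙_B` only holds off a null set depending on `B`, so to get one
null set for all sequences we use that each `T²𝟙_B` is continuous: by the Lindelöf property,
for each `m` countably many sets `B` with `μ(B) ≤ 1/m` already realise every superlevel set
`{T²𝟙_B > c}`, and it suffices to discard the null sets of these countably many `B`.
-/

open MeasureTheory Filter Topology Set

/-- `Bb f`: `f` is a bounded Borel measurable real-valued function. -/
def Bb {Ω : Type*} [MeasurableSpace Ω] (f : Ω → ℝ) : Prop :=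
  Measurable f ∧ ∃ C : ℝ, ∀ x, |f x| ≤ C

theorem exists_countable_subset_forall_lt_imp_exists_lt {X ι : Type*} [TopologicalSpace X]
    [HereditarilyLindelofSpace X] (S : Set ι) (f : ι → X → ℝ)
    (hf : ∀ i ∈ S, LowerSemicontinuous (f i)) :
    ∃ J ⊆ S, J.Countable ∧ ∀ x c, ∀ i ∈ S, c < f i x → ∃ j ∈ J, c < f j x := by
  choose t htc ht using fun q : ℚ =>
    eq_open_union_countable (fun i : S => f i ⁻¹' Ioi (q : ℝ))
      fun i => (hf i i.2).isOpen_preimage _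
  refine ⟨⋃ q, Subtype.val '' t q, iUnion_subset fun q => image_subset_iff.2 fun i _ => i.2,
    countable_iUnion fun q => (htc q).image _, fun x c i hi hci => ?_⟩
  obtain ⟨q, hcq, hqi⟩ := exists_rat_btwn hci
  have hx : x ∈ ⋃ j ∈ t q, f j ⁻¹' Ioi (q : ℝ) := (ht q).symm ▸ mem_iUnion.2 ⟨⟨i, hi⟩, hqi⟩
  obtain ⟨j, hj, hqj⟩ := mem_iUnion₂.1 hx
  exact ⟨j, mem_iUnion.2 ⟨q, mem_image_of_mem _ hj⟩, hcq.trans hqj⟩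

theorem tendsto_zero_of_countable_witnesses {α : Type*} {F : α → ℝ} {S J : ℕ → Set α}
    (hJ : ∀ m c, ∀ a ∈ S m, c < F a → ∃ b ∈ J m, c < F b)
    (hJ_seq : ∀ b : ℕ → α, (∀ m, b m ∈ J m) → Tendsto (fun m => F (b m)) atTop (𝓝 0))
    {a : ℕ → α} (ha : ∀ m, ∀ᶠ n in atTop, a n ∈ S m) (ha_nonneg : ∀ n, 0 ≤ F (a n)) :
    Tendsto (fun n => F (a n)) atTop (𝓝 0) := by
  have small : ∀ ε > 0, ∃ m, ∀ s ∈ S m, F s ≤ ε := by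
    intro ε hε
    by_contra! hbig
    choose s hsS hεs using hbig
    choose b hbJ hεb using fun m => hJ m ε (s m) (hsS m) (hεs m)
    obtain ⟨m, hm⟩ := ((hJ_seq b hbJ).eventually (gt_mem_nhds hε)).exists
    exact (hεb m).not_gt hm
  refine tendsto_order.2 ⟨fun ε hε => Eventually.of_forall fun n => hε.trans_le (ha_nonneg n),
    fun ε hε => ?_⟩
  obtain ⟨δ, hδ, hδε⟩ := exists_between hε
  obtain ⟨m, hm⟩ := small δ hδ
  filter_upwards [ha m] with n hn using (hm _ hn).trans_lt hδε

theorem tendsto_integral_mul_of_bounded_of_tendsto_zero {Ω ι : Type*} [MeasurableSpace Ω]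
    {μ : Measure Ω} {l : Filter ι} [l.IsCountablyGenerated] {f : Ω → ℝ} (hf : Integrable f μ)
    {g : ι → Ω → ℝ} {C : ℝ} (hg_meas : ∀ i, AEStronglyMeasurable (g i) μ)
    (hg_bdd : ∀ i y, |g i y| ≤ C) (hg : ∀ᵐ y ∂μ, Tendsto (fun i => g i y) l (𝓝 0)) :
    Tendsto (fun i => ∫ y, f y * g i y ∂μ) l (𝓝 0) := by
  have h := tendsto_integral_filter_of_dominated_convergence (fun y => |f y| * C)
    (Eventually.of_forall fun i => hf.aestronglyMeasurable.mul (hg_meas i))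
    (Eventually.of_forall fun i => Eventually.of_forall fun y => by
      rw [Pi.mul_apply, Real.norm_eq_abs, abs_mul]
      exact mul_le_mul_of_nonneg_left (hg_bdd i y) (abs_nonneg _))
    (hf.abs.mul_const C) (hg.mono fun y hy => by simpa using hy.const_mul (f y))
  simpa using h

theorem Bb.const {Ω : Type*} [MeasurableSpace Ω] (c : ℝ) : Bb fun _ : Ω => c :=
  ⟨measurable_const, |c|, fun _ => le_rfl⟩

theorem Bb.indicator_one {Ω : Type*} [MeasurableSpace Ω] {A : Set Ω} (hA : MeasurableSet A) :
    Bb (A.indicator fun _ => (1 : ℝ)) :=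
  ⟨measurable_const.indicator hA, 1, fun x => by
    by_cases hx : x ∈ A <;> simp [hx]⟩

def IsIntegralKernel {Ω : Type*} [MeasurableSpace Ω] (μ : Measure Ω)
    (T : (Ω → ℝ) → (Ω → ℝ)) (k : Ω → Ω → ℝ) : Prop :=
  ∀ f, Bb f → (∀ x, Integrable (fun y => k x y * f y) μ) ∧
    ∀ᵐ x ∂μ, T f x = ∫ y, k x y * f y ∂μ

section PositiveOperator

variable {Ω : Type*} [MeasurableSpace Ω] {μ : Measure Ω} {T : (Ω → ℝ) → (Ω → ℝ)}

theorem apply_indicator_one_nonneg (hpos : ∀ f, Bb f → (∀ x, 0 ≤ f x) → ∀ x, 0 ≤ T f x)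
    {A : Set Ω} (hA : MeasurableSet A) (y : Ω) : 0 ≤ T (A.indicator fun _ => (1 : ℝ)) y :=
  hpos _ (Bb.indicator_one hA) (fun _ => indicator_nonneg (fun _ _ => zero_le_one) _) y

theorem apply_indicator_one_le_apply_one
    (hadd : ∀ f g, Bb f → Bb g → T (f + g) = T f + T g)
    (hpos : ∀ f, Bb f → (∀ x, 0 ≤ f x) → ∀ x, 0 ≤ T f x)
    {A : Set Ω} (hA : MeasurableSet A) (y : Ω) :
    T (A.indicator fun _ => (1 : ℝ)) y ≤ T (fun _ => 1) y := by
  have hsplit : (A.indicator fun _ => (1 : ℝ)) + Aᶜ.indicator (fun _ => 1) = fun _ => 1 :=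
    funext fun z => by by_cases hz : z ∈ A <;> simp [hz]
  have h := congrFun (hadd _ _ (Bb.indicator_one hA) (Bb.indicator_one hA.compl)) y
  rw [hsplit, Pi.add_apply] at h
  linarith [apply_indicator_one_nonneg hpos hA.compl y]

theorem IsIntegralKernel.ae_apply_indicator_one_eq {k : Ω → Ω → ℝ}
    (hk : IsIntegralKernel μ T k) {A : Set Ω} (hA : MeasurableSet A) :
    ∀ᵐ y ∂μ, T (A.indicator fun _ => (1 : ℝ)) y = ∫ z in A, k y z ∂μ := by
  filter_upwards [(hk _ (Bb.indicator_one hA)).2] with y hy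
  rw [hy, ← integral_indicator hA]
  congr 1 with z
  by_cases hz : z ∈ A <;> simp [hz]

theorem IsIntegralKernel.tendsto_integral_mul_apply_indicator_one {k : Ω → Ω → ℝ}
    (hk : IsIntegralKernel μ T k) (hTBb : ∀ f, Bb f → Bb (T f))
    (hadd : ∀ f g, Bb f → Bb g → T (f + g) = T f + T g)
    (hpos : ∀ f, Bb f → (∀ x, 0 ≤ f x) → ∀ x, 0 ≤ T f x)
    {B : ℕ → Set Ω} (hB : ∀ m, MeasurableSet (B m))
    (hB0 : Tendsto (fun m => μ (B m)) atTop (𝓝 0)) (x : Ω) :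
    Tendsto (fun m => ∫ y, k x y * T ((B m).indicator fun _ => (1 : ℝ)) y ∂μ) atTop (𝓝 0) := by
  have hk_int : ∀ x, Integrable (k x) μ := fun x => by simpa using (hk _ (Bb.const 1)).1 x
  obtain ⟨-, C, hC⟩ := hTBb _ (Bb.const 1)
  refine tendsto_integral_mul_of_bounded_of_tendsto_zero (hk_int x)
    (fun m => (hTBb _ (Bb.indicator_one (hB m))).1.aestronglyMeasurable) (C := C)
    (fun m y => ?_) ?_
  · rw [abs_of_nonneg (apply_indicator_one_nonneg hpos (hB m) y)]
    exact (apply_indicator_one_le_apply_one hadd hpos (hB m) y).trans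
      ((le_abs_self _).trans (hC y))
  · filter_upwards [ae_all_iff.2 fun m => hk.ae_apply_indicator_one_eq (hB m)] with y hy
    simpa only [hy] using (hk_int y).tendsto_setIntegral_nhds_zero hB0

end PositiveOperator

theorem stmt_4_general {Ω : Type*} [TopologicalSpace Ω] [SecondCountableTopology Ω]
    [MeasurableSpace Ω]
    (μ : Measure Ω)
    (T : (Ω → ℝ) → (Ω → ℝ))
    (hTBb : ∀ f, Bb f → Bb (T f))
    (hadd : ∀ f g, Bb f → Bb g → T (f + g) = T f + T g)
    (hpos : ∀ f, Bb f → (∀ x, 0 ≤ f x) → ∀ x, 0 ≤ T f x)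
    (hSF : ∀ f, Bb f → Continuous (T f))
    (hker : ∃ k : Ω → Ω → ℝ, Measurable (Function.uncurry k) ∧
      ∀ f, Bb f → (∀ x, Integrable (fun y => k x y * f y) μ) ∧
        ∀ᵐ x ∂μ, T f x = ∫ y, k x y * f y ∂μ) :
    ∃ N : Set Ω, μ N = 0 ∧ ∀ (A : ℕ → Set Ω), (∀ n, MeasurableSet (A n)) →
      Tendsto (fun n => μ (A n)) atTop (nhds 0) →
      ∀ x ∉ N, Tendsto (fun n => T (T ((A n).indicator fun _ => (1 : ℝ))) x) atTop (nhds 0) := by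
  obtain ⟨k, -, hk : IsIntegralKernel μ T k⟩ := hker
  set S : ℕ → Set (Set Ω) := fun m => {A | MeasurableSet A ∧ μ A ≤ (m : ENNReal)⁻¹}
  choose J hJS hJc hJ using fun m => exists_countable_subset_forall_lt_imp_exists_lt (S m)
    (fun A => T (T (A.indicator fun _ => (1 : ℝ))))
    fun A hA => (hSF _ (hTBb _ (Bb.indicator_one hA.1))).lowerSemicontinuous
  refine ⟨⋃ m, ⋃ A ∈ J m, {x | T (T (A.indicator fun _ => 1)) x ≠
    ∫ y, k x y * T (A.indicator fun _ => 1) y ∂μ}, ?_, fun A hA hA0 x hx => ?_⟩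
  · exact measure_iUnion_null fun m => (measure_biUnion_null_iff (hJc m)).2 fun B hB =>
      ae_iff.1 (hk _ (hTBb _ (Bb.indicator_one (hJS m hB).1))).2
  refine tendsto_zero_of_countable_witnesses (fun m c => hJ m x c) (fun B hB => ?_)
    (fun m => ?_) fun n => hpos _ (hTBb _ (Bb.indicator_one (hA n)))
      (apply_indicator_one_nonneg hpos (hA n)) x
  · have hB_meas : ∀ m, MeasurableSet (B m) := fun m => (hJS m (hB m)).1
    have hB0 : Tendsto (fun m => μ (B m)) atTop (𝓝 0) :=
      tendsto_of_tendsto_of_tendsto_of_le_of_le tendsto_const_nhds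
        ENNReal.tendsto_inv_nat_nhds_zero (fun _ => zero_le) fun m => (hJS m (hB m)).2
    have hx_kernel : ∀ m, T (T ((B m).indicator fun _ => 1)) x =
        ∫ y, k x y * T ((B m).indicator fun _ => 1) y ∂μ := fun m => by
      by_contra hne
      exact hx (mem_iUnion.2 ⟨m, mem_iUnion₂.2 ⟨B m, hB m, hne⟩⟩)
    simpa only [hx_kernel] using
      IsIntegralKernel.tendsto_integral_mul_apply_indicator_one hk hTBb hadd hpos hB_meas hB0 x
  · filter_upwards [hA0.eventually (ge_mem_nhds (ENNReal.inv_pos.2 (ENNReal.natCast_ne_top m)))]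
      with n hn using ⟨hA n, hn⟩

theorem stmt_4 {Ω : Type*} [TopologicalSpace Ω] [T2Space Ω] [SecondCountableTopology Ω]
    [MeasurableSpace Ω] [BorelSpace Ω]
    (μ : Measure Ω) [IsFiniteMeasure μ] (hμ : μ ≠ 0)
    (T : (Ω → ℝ) → (Ω → ℝ))
    (hTBb : ∀ f, Bb f → Bb (T f))
    (hadd : ∀ f g, Bb f → Bb g → T (f + g) = T f + T g)
    (hsmul : ∀ (c : ℝ) (f), Bb f → T (c • f) = c • T f)
    (hpos : ∀ f, Bb f → (∀ x, 0 ≤ f x) → ∀ x, 0 ≤ T f x)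
    (hSF : ∀ f, Bb f → Continuous (T f))
    (hker : ∃ k : Ω → Ω → ℝ, Measurable (Function.uncurry k) ∧
      ∀ f, Bb f → (∀ x, Integrable (fun y => k x y * f y) μ) ∧
        ∀ᵐ x ∂μ, T f x = ∫ y, k x y * f y ∂μ)
    (hinv : ∀ f, Bb f → ∫ x, T f x ∂μ = ∫ x, f x ∂μ) :
    ∃ N : Set Ω, μ N = 0 ∧ ∀ (A : ℕ → Set Ω), (∀ n, MeasurableSet (A n)) →
      Tendsto (fun n => μ (A n)) atTop (nhds 0) →
      ∀ x ∉ N, Tendsto (fun n => T (T ((A n).indicator fun _ => (1 : ℝ))) x) atTop (nhds 0) :=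
  stmt_4_general μ T hTBb hadd hpos hSF hker
end

section
/- Let Ω be a Hausdorff space, (T(t))_{t≥0} a positive strong Feller semigroup on B_b(Ω), μ a strictly positive, finite, invariant Borel measure, and e ∈ B_b(Ω) a fixed point of the semigroup with e(x) > 0 for all x ∈ Ω. Suppose M ⊂ Ω is a Borel set such that L¹(M,μ) := { f ∈ L¹(Ω,μ) : f = 0 a.e. on Ω\M } is invariant under T(τ) for some τ > 0. Then there exists an open and closed set A ⊂ Ω with μ(A △ M) = 0 and T(τ)(e𝟙_M) = e𝟙_A pointwise. -/
open MeasureTheory Filter Topology Set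

lemma Bb.integrable {Ω : Type*} [MeasurableSpace Ω] {μ : Measure Ω} [IsFiniteMeasure μ]
    {f : Ω → ℝ} (hf : Bb f) : Integrable f μ := by
  obtain ⟨hm, C, hC⟩ := hf
  exact (integrable_const C).mono' hm.aestronglyMeasurable
    (Filter.Eventually.of_forall fun x => by simpa using hC x)

lemma cont_ae_zero {Ω : Type*} [TopologicalSpace Ω] [MeasurableSpace Ω] [BorelSpace Ω]
    (μ : Measure Ω)
    (hμpos : ∀ U : Set Ω, IsOpen U → U.Nonempty → 0 < μ U)
    {h : Ω → ℝ} (hc : Continuous h) (hz : ∀ᵐ x ∂μ, h x = 0) : ∀ x, h x = 0 := by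
  by_contra hcon
  push_neg at hcon
  obtain ⟨x, hx⟩ := hcon
  have hU : IsOpen {y | h y ≠ 0} := isOpen_compl_singleton.preimage hc
  have h1 : 0 < μ {y | h y ≠ 0} := hμpos _ hU ⟨x, hx⟩
  have h2 : μ {y | h y ≠ 0} = 0 := by rw [ae_iff] at hz; exact hz
  simp [h2] at h1

theorem stmt_9 {Ω : Type*} [TopologicalSpace Ω] [T2Space Ω]
    [MeasurableSpace Ω] [BorelSpace Ω]
    (μ : Measure Ω) [IsFiniteMeasure μ]
    (hμpos : ∀ U : Set Ω, IsOpen U → U.Nonempty → 0 < μ U)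
    (T : ℝ → (Ω → ℝ) → (Ω → ℝ))
    (hTBb : ∀ t, 0 ≤ t → ∀ f, Bb f → Bb (T t f))
    (hadd : ∀ t, 0 ≤ t → ∀ f g, Bb f → Bb g → T t (f + g) = T t f + T t g)
    (hsmul : ∀ t, 0 ≤ t → ∀ (c : ℝ) (f), Bb f → T t (c • f) = c • T t f)
    (hpos : ∀ t, 0 ≤ t → ∀ f, Bb f → (∀ x, 0 ≤ f x) → ∀ x, 0 ≤ T t f x)
    (hT0 : ∀ f, Bb f → T 0 f = f)
    (hsg : ∀ s t : ℝ, 0 ≤ s → 0 ≤ t → ∀ f, Bb f → T (s + t) f = T s (T t f))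
    (hSF : ∀ t, 0 < t → ∀ f, Bb f → Continuous (T t f))
    (hinv : ∀ t, 0 ≤ t → ∀ f, Bb f → ∫ x, T t f x ∂μ = ∫ x, f x ∂μ)
    (e : Ω → ℝ) (heBb : Bb e) (hefix : ∀ t, 0 ≤ t → T t e = e)
    (hepos : ∀ x, 0 < e x)
    (M : Set Ω) (hM : MeasurableSet M) (τ : ℝ) (hτ : 0 < τ)
    (hMinv : ∀ f, Bb f → (∀ᵐ x ∂μ, x ∉ M → f x = 0) →
      ∀ᵐ x ∂μ, x ∉ M → T τ f x = 0) :
    ∃ A : Set Ω, IsClopen A ∧ μ (symmDiff A M) = 0 ∧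
      ∀ x, T τ (fun y => e y * M.indicator (fun _ => (1 : ℝ)) y) x
        = e x * A.indicator (fun _ => (1 : ℝ)) x := by
  obtain ⟨hem, Ce, hCe⟩ := heBb
  set g : Ω → ℝ := fun y => e y * M.indicator (fun _ => (1 : ℝ)) y with hg_def
  have hgM : ∀ x, x ∈ M → g x = e x := fun x hx => by simp [hg_def, hx]
  have hgMc : ∀ x, x ∉ M → g x = 0 := fun x hx => by simp [hg_def, hx]
  have hg_bound : ∀ x, |g x| ≤ Ce := by
    intro x
    by_cases hx : x ∈ M
    · rw [hgM x hx]; exact hCe x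
    · rw [hgMc x hx]; simpa using le_trans (abs_nonneg (e x)) (hCe x)
  have hgBb : Bb g := ⟨hem.mul (measurable_const.indicator hM), Ce, hg_bound⟩
  -- e is continuous
  have he_cont : Continuous e := by
    rw [← hefix τ hτ.le]
    exact hSF τ hτ e ⟨hem, Ce, hCe⟩
  set f : Ω → ℝ := T τ g with hf_def
  have hfBb : Bb f := hTBb τ hτ.le g hgBb
  have hf_cont : Continuous f := hSF τ hτ g hgBb
  have hg_nonneg : ∀ x, 0 ≤ g x := by
    intro x
    by_cases hx : x ∈ M
    · rw [hgM x hx]; exact (hepos x).le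
    · rw [hgMc x hx]
  have hg_le : ∀ x, g x ≤ e x := by
    intro x
    by_cases hx : x ∈ M
    · rw [hgM x hx]
    · rw [hgMc x hx]; exact (hepos x).le
  have hf_nonneg : ∀ x, 0 ≤ f x := hpos τ hτ.le g hgBb hg_nonneg
  -- f ≤ e
  have hemgBb : Bb (e - g) := by
    refine ⟨hem.sub hgBb.1, Ce + Ce, fun x => ?_⟩
    calc |(e - g) x| ≤ |e x| + |g x| := abs_sub (e x) (g x)
      _ ≤ Ce + Ce := add_le_add (hCe x) (hg_bound x)
  have hsplit : T τ e = T τ (e - g) + T τ g := by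
    have h1 : (e - g) + g = e := by ext x; simp
    conv_lhs => rw [← h1]
    exact hadd τ hτ.le (e - g) g hemgBb hgBb
  have hf_le : ∀ x, f x ≤ e x := by
    intro x
    have h1 : 0 ≤ T τ (e - g) x :=
      hpos τ hτ.le (e - g) hemgBb (fun y => by simpa using hg_le y) x
    have h2 : e x = T τ (e - g) x + f x := by
      conv_lhs => rw [← hefix τ hτ.le, hsplit]
      rfl
    linarith
  -- f = 0 a.e. off M
  have hf_zero : ∀ᵐ x ∂μ, x ∉ M → f x = 0 :=
    hMinv g hgBb (Filter.Eventually.of_forall hgMc)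
  -- ∫ f = ∫ g
  have hint : ∫ x, f x ∂μ = ∫ x, g x ∂μ := hinv τ hτ.le g hgBb
  -- g = f a.e.
  have hgf_ae : ∀ᵐ x ∂μ, g x = f x := by
    have hnn : 0 ≤ᵐ[μ] (g - f) := by
      filter_upwards [hf_zero] with x hx
      by_cases hxM : x ∈ M
      · have := hf_le x
        have := hgM x hxM
        simp only [Pi.sub_apply, Pi.zero_apply]
        linarith
      · simp only [Pi.sub_apply, Pi.zero_apply]
        rw [hgMc x hxM, hx hxM]
        norm_num
    have hintgr : Integrable (g - f) μ := hgBb.integrable.sub hfBb.integrable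
    have hzero : ∫ x, (g - f) x ∂μ = 0 := by
      simp only [Pi.sub_apply]
      rw [integral_sub hgBb.integrable hfBb.integrable, hint]
      ring
    have := (integral_eq_zero_iff_of_nonneg_ae hnn hintgr).mp hzero
    filter_upwards [this] with x hx
    have : g x - f x = 0 := hx
    linarith
  -- φ := f / e is continuous and equals indicator M a.e.
  set φ : Ω → ℝ := fun x => f x / e x with hφ_def
  have hφ_cont : Continuous φ := hf_cont.div he_cont fun x => (hepos x).ne'
  have hφ_ae : ∀ᵐ x ∂μ, φ x = M.indicator (fun _ => (1 : ℝ)) x := by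
    filter_upwards [hgf_ae] with x hx
    show f x / e x = _
    rw [← hx]
    show e x * _ / e x = _
    rw [mul_comm, mul_div_assoc, div_self (hepos x).ne', mul_one]
  -- φ² = φ everywhere
  have hψ : ∀ x, φ x * φ x - φ x = 0 := by
    apply cont_ae_zero μ hμpos (by continuity)
    filter_upwards [hφ_ae] with x hx
    rw [hx]
    by_cases hxM : x ∈ M <;> simp [hxM]
  have hdich : ∀ x, φ x = 0 ∨ φ x = 1 := by
    intro x
    have h := hψ x
    have : φ x * (φ x - 1) = 0 := by linear_combination h
    rcases mul_eq_zero.mp this with h' | h'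
    · left; exact h'
    · right; linarith
  -- the clopen set
  refine ⟨{x | φ x = 1}, ?_, ?_, ?_⟩
  · constructor
    · exact isClosed_eq hφ_cont continuous_const
    · have hAc : {x | φ x = 1}ᶜ = {x | φ x = 0} := by
        ext x
        simp only [mem_compl_iff, mem_setOf_eq]
        constructor
        · intro h; rcases hdich x with h' | h' <;> [exact h'; exact absurd h' h]
        · intro h h1; rw [h] at h1; norm_num at h1
      rw [← isClosed_compl_iff, hAc]
      exact isClosed_eq hφ_cont continuous_const
  · have hnull : μ {x | ¬ φ x = M.indicator (fun _ => (1 : ℝ)) x} = 0 := by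
      rw [← ae_iff]; exact hφ_ae
    refine measure_mono_null ?_ hnull
    intro x hx
    rcases hx with ⟨hxA, hxM⟩ | ⟨hxM, hxA⟩
    · simp only [mem_setOf_eq] at hxA ⊢
      rw [hxA]
      simp [hxM]
    · simp only [mem_setOf_eq] at hxA ⊢
      rcases hdich x with h' | h'
      · rw [h']; simp [hxM]
      · exact absurd h' hxA
  · intro x
    show f x = e x * _
    rcases hdich x with h' | h'
    · have hxA : x ∉ {x | φ x = 1} := by
        simp only [mem_setOf_eq]; rw [h']; norm_num
      have h'' : f x / e x = 0 := h'
      rw [div_eq_zero_iff] at h''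
      rw [h''.resolve_right (hepos x).ne', indicator_of_notMem hxA]
      ring
    · have hxA : x ∈ {x | φ x = 1} := h'
      have h'' : f x / e x = 1 := h'
      rw [div_eq_one_iff_eq (hepos x).ne'] at h''
      rw [h'', indicator_of_mem hxA]
      ring
end

section
/- Let Ω be a second countable Hausdorff space, (T(t))_{t≥0} a positive strong Feller semigroup on B_b(Ω), and μ ≠ 0 a positive finite invariant Borel measure. Assume there is no closed set A with ∅ ≠ A ⊊ Ω such that the ideal { f ∈ B_b(Ω) : f = 0 on A } is invariant under all T(t). Then μ is strictly positive, i.e., μ(U) > 0 for every nonempty open set U ⊂ Ω. -/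
open MeasureTheory Filter Topology Set

lemma Bb.abs' {Ω : Type*} [MeasurableSpace Ω] {f : Ω → ℝ} (hf : Bb f) :
    Bb (fun x => |f x|) := by
  obtain ⟨C, hC⟩ := hf.2
  exact ⟨hf.1.abs, C, fun x => by simpa [abs_abs] using hC x⟩

lemma Bb.addBb {Ω : Type*} [MeasurableSpace Ω] {f g : Ω → ℝ} (hf : Bb f) (hg : Bb g) :
    Bb (f + g) := by
  obtain ⟨C, hC⟩ := hf.2
  obtain ⟨D, hD⟩ := hg.2
  exact ⟨hf.1.add hg.1, C + D, fun x =>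
    (abs_add_le _ _).trans (add_le_add (hC x) (hD x))⟩

lemma Bb.smulBb {Ω : Type*} [MeasurableSpace Ω] {f : Ω → ℝ} (c : ℝ) (hf : Bb f) :
    Bb (c • f) := by
  obtain ⟨C, hC⟩ := hf.2
  refine ⟨hf.1.const_smul c, |c| * C, fun x => ?_⟩
  simp only [Pi.smul_apply, smul_eq_mul, abs_mul]
  exact mul_le_mul_of_nonneg_left (hC x) (abs_nonneg c)

theorem stmt_10 {Ω : Type*} [TopologicalSpace Ω] [T2Space Ω] [SecondCountableTopology Ω]
    [MeasurableSpace Ω] [BorelSpace Ω]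
    (μ : Measure Ω) [IsFiniteMeasure μ] (hμ : μ ≠ 0)
    (T : ℝ → (Ω → ℝ) → (Ω → ℝ))
    (hTBb : ∀ t, 0 ≤ t → ∀ f, Bb f → Bb (T t f))
    (hadd : ∀ t, 0 ≤ t → ∀ f g, Bb f → Bb g → T t (f + g) = T t f + T t g)
    (hsmul : ∀ t, 0 ≤ t → ∀ (c : ℝ) (f), Bb f → T t (c • f) = c • T t f)
    (hpos : ∀ t, 0 ≤ t → ∀ f, Bb f → (∀ x, 0 ≤ f x) → ∀ x, 0 ≤ T t f x)
    (hT0 : ∀ f, Bb f → T 0 f = f)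
    (hsg : ∀ s t : ℝ, 0 ≤ s → 0 ≤ t → ∀ f, Bb f → T (s + t) f = T s (T t f))
    (hSF : ∀ t, 0 < t → ∀ f, Bb f → Continuous (T t f))
    (hinv : ∀ t, 0 ≤ t → ∀ f, Bb f → ∫ x, T t f x ∂μ = ∫ x, f x ∂μ)
    (hirr : ¬ ∃ A : Set Ω, IsClosed A ∧ A.Nonempty ∧ A ≠ univ ∧
      ∀ t, 0 ≤ t → ∀ f, Bb f → (∀ x ∈ A, f x = 0) → ∀ x ∈ A, T t f x = 0) :
    ∀ U : Set Ω, IsOpen U → U.Nonempty → 0 < μ U := by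
  intro U hU hUne
  by_contra hcon
  rw [not_lt, le_zero_iff] at hcon
  -- the union of all open null sets
  set S : Set (Set Ω) := {V | IsOpen V ∧ μ V = 0} with hSdef
  set O : Set Ω := ⋃₀ S with hOdef
  have hOopen : IsOpen O := isOpen_sUnion fun s hs => hs.1
  obtain ⟨S', hS'count, hS'sub, hS'union⟩ :=
    TopologicalSpace.isOpen_sUnion_countable S (fun s hs => hs.1)
  have hOnull : μ O = 0 := by
    rw [hOdef, ← hS'union]
    exact (measure_sUnion_null_iff hS'count).mpr fun s hs => (hS'sub hs).2
  set A : Set Ω := Oᶜ with hAdef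
  have hAclosed : IsClosed A := hOopen.isClosed_compl
  have hUO : U ⊆ O := subset_sUnion_of_mem ⟨hU, hcon⟩
  have hAne : A.Nonempty := by
    rw [hAdef, nonempty_compl]
    intro h
    apply hμ
    apply Measure.measure_univ_eq_zero.mp
    rw [← h]; exact hOnull
  have hAneq : A ≠ univ := by
    obtain ⟨x, hx⟩ := hUne
    intro h
    have hxA : x ∈ A := h ▸ mem_univ x
    exact hxA (hUO hx)
  refine hirr ⟨A, hAclosed, hAne, hAneq, ?_⟩
  intro t ht f hf hfA
  rcases eq_or_lt_of_le ht with rfl | htpos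
  · intro x hx
    rw [hT0 f hf]
    exact hfA x hx
  -- t > 0
  set g : Ω → ℝ := fun x => |f x| with hgdef
  have hgBb : Bb g := hf.abs'
  have hgA : ∀ x ∈ A, g x = 0 := fun x hx => by simp [hgdef, hfA x hx]
  -- g = 0 a.e.
  have hgnull : μ {x | g x ≠ 0} = 0 := by
    refine measure_mono_null ?_ hOnull
    intro x hx
    by_contra hxO
    exact hx (hgA x hxO)
  have hgae : g =ᵐ[μ] 0 := by
    rw [Filter.EventuallyEq, ae_iff]
    simpa using hgnull
  have hintg0 : ∫ x, g x ∂μ = 0 := by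
    rw [integral_congr_ae hgae]; simp
  have hintTg0 : ∫ x, T t g x ∂μ = 0 := by rw [hinv t ht g hgBb]; exact hintg0
  have hTgBb : Bb (T t g) := hTBb t ht g hgBb
  have hTgcont : Continuous (T t g) := hSF t htpos g hgBb
  have hTgnn : ∀ x, 0 ≤ T t g x := hpos t ht g hgBb (fun x => abs_nonneg _)
  have hTgint : Integrable (T t g) μ := by
    obtain ⟨C, hC⟩ := hTgBb.2
    exact ⟨hTgBb.1.aestronglyMeasurable,
      HasFiniteIntegral.of_bounded (C := C) (ae_of_all _ fun x => by
        simpa [Real.norm_eq_abs] using hC x)⟩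
  have hTgae : T t g =ᵐ[μ] 0 :=
    (integral_eq_zero_iff_of_nonneg hTgnn hTgint).mp hintTg0
  -- the open set where T t g > 0 is null, hence contained in O
  have hVnull : μ {x | 0 < T t g x} = 0 := by
    have : μ {x | T t g x ≠ 0} = 0 := by
      have := hTgae
      rw [Filter.EventuallyEq, ae_iff] at this
      simpa using this
    refine measure_mono_null (fun x hx => ?_) this
    exact ne_of_gt hx
  have hVsub : {x | 0 < T t g x} ⊆ O :=
    subset_sUnion_of_mem ⟨isOpen_lt continuous_const hTgcont, hVnull⟩
  have hTgA : ∀ x ∈ A, T t g x = 0 := by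
    intro x hx
    have hnot : ¬ 0 < T t g x := fun h => hx (hVsub h)
    exact le_antisymm (not_lt.mp hnot) (hTgnn x)
  -- now bound |T t f| by T t g
  intro x hx
  have hBb1 : Bb (g + (-1 : ℝ) • f) := hgBb.addBb (hf.smulBb (-1))
  have hBb2 : Bb (g + f) := hgBb.addBb hf
  have h1 : 0 ≤ T t (g + (-1 : ℝ) • f) x := by
    refine hpos t ht _ hBb1 (fun y => ?_) x
    simp only [Pi.add_apply, Pi.smul_apply, smul_eq_mul, hgdef]
    have := neg_abs_le (f y)
    linarith [le_abs_self (f y)]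
  have h2 : 0 ≤ T t (g + f) x := by
    refine hpos t ht _ hBb2 (fun y => ?_) x
    simp only [Pi.add_apply, hgdef]
    linarith [neg_abs_le (f y)]
  have e1 : T t (g + (-1 : ℝ) • f) = T t g + (-1 : ℝ) • T t f := by
    rw [hadd t ht g ((-1 : ℝ) • f) hgBb (hf.smulBb (-1)), hsmul t ht (-1) f hf]
  have e2 : T t (g + f) = T t g + T t f := hadd t ht g f hgBb hf
  rw [e1] at h1
  rw [e2] at h2
  simp only [Pi.add_apply, Pi.smul_apply, smul_eq_mul] at h1 h2
  have hz := hTgA x hx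
  linarith
end

section
/- Let μ be a σ-finite positive measure on Ω and (T(t))_{t≥0} a positive, irreducible semigroup on L¹(Ω,μ) such that ∫ T(t)f dμ = ∫ f dμ for all f ∈ L¹(Ω,μ) and t ≥ 0, and fix(T) ≠ {0}. Then there exists e ∈ fix(T) with e(x) > 0 for μ-almost every x, and fix(T) = span{e} is one-dimensional. -/
/-!
If `S` is positive and preserves integrals, then `f = S f` forces `S |f| = |f|` and `S f⁺ = f⁺`:
we have `|f| ≤ S |f|` and `f⁺ ≤ S f⁺`, and the two sides have the same integral. For a fixed point
`e ≥ 0`, `e ≠ 0`, the closure of the principal ideal generated by `e` is a closed invariant ideal,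
so by irreducibility it is all of `L¹`; since all its elements vanish on `{e = 0}`, σ-finiteness
gives `e > 0` a.e. Applied to `f⁺` this shows that every fixed point has a sign, so the fixed point
`f - (∫ f / ∫ e) • e`, having integral zero, vanishes.
-/

open MeasureTheory Filter Set LatticeOrderedAddCommGroup

section PositiveMap

variable {E F 𝓕 : Type*} [AddCommGroup E] [AddCommGroup F] [FunLike 𝓕 E F]
  [AddMonoidHomClass 𝓕 E F] {S : 𝓕}

theorem map_le_map_of_map_nonneg [PartialOrder E] [IsOrderedAddMonoid E] [PartialOrder F]
    [IsOrderedAddMonoid F] (hS : ∀ f, 0 ≤ f → 0 ≤ S f) {f g : E} (h : f ≤ g) : S f ≤ S g := by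
  simpa [sub_nonneg] using hS (g - f) (sub_nonneg.2 h)

theorem abs_map_le_map_abs_of_map_nonneg [Lattice E] [IsOrderedAddMonoid E] [Lattice F]
    [IsOrderedAddMonoid F] (hS : ∀ f, 0 ≤ f → 0 ≤ S f) (f : E) : |S f| ≤ S |f| :=
  abs_le'.2 ⟨map_le_map_of_map_nonneg hS (le_abs_self f),
    by simpa using map_le_map_of_map_nonneg hS (neg_le_abs f)⟩

end PositiveMap

theorem LatticeOrderedAddCommGroup.IsSolid.closure {E : Type*} [NormedAddCommGroup E] [Lattice E]
    [HasSolidNorm E] [IsOrderedAddMonoid E] {s : Set E} (hs : IsSolid s) :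
    IsSolid (closure s) := by
  intro x hx y hyx
  -- clamp `y` to `[-|z|, |z|]`: continuous in `z`, maps `s` to `s`, and fixes `y` at `z = x`
  have hclamp : Continuous fun z : E => y ⊓ |z| ⊔ -|z| := by
    have : Continuous fun z : E => |z| := continuous_id.sup continuous_neg
    fun_prop
  have hmaps : MapsTo (fun z : E => y ⊓ |z| ⊔ -|z|) s s := fun z hz =>
    hs hz <| abs_le'.2 ⟨sup_le inf_le_right (neg_le_self (abs_nonneg z)), by
      rw [neg_sup]; exact inf_le_right.trans (neg_neg |z|).le⟩
  have hy : y ⊓ |x| ⊔ -|x| = y := by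
    rw [inf_eq_left.2 ((le_abs_self y).trans hyx),
      sup_eq_left.2 (neg_le.1 ((neg_le_abs y).trans hyx))]
  simpa only [hy] using map_mem_closure hclamp hx hmaps

def IsLatticeIrreducible {E ι : Type*} [TopologicalSpace E] [AddCommGroup E] [Lattice E]
    [Module ℝ E] (S : ι → E →L[ℝ] E) : Prop :=
  ∀ J : Submodule ℝ E, IsClosed (J : Set E) → IsSolid (J : Set E) →
    (∀ i, ∀ f ∈ J, S i f ∈ J) → J = ⊥ ∨ J = ⊤

namespace MeasureTheory.Lp

variable {α : Type*} [MeasurableSpace α] {μ : Measure α} {p : ENNReal}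

theorem abs_le_smul_iff_ae {f e : Lp ℝ p μ} {c : ℝ} :
    |f| ≤ c • e ↔ ∀ᵐ x ∂μ, |f x| ≤ c * e x := by
  rw [← coeFn_le]
  refine eventually_congr ?_
  filter_upwards [coeFn_abs f, coeFn_smul c e] with x h1 h2
  simp [h1, h2]

def principalIdeal (e : Lp ℝ p μ) : Submodule ℝ (Lp ℝ p μ) where
  carrier := {f | ∃ c : ℝ, |f| ≤ c • e}
  zero_mem' := ⟨0, by simp⟩
  add_mem' := by
    rintro f g ⟨a, hf⟩ ⟨b, hg⟩
    exact ⟨a + b, (abs_add_le f g).trans (add_smul a b e ▸ add_le_add hf hg)⟩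
  smul_mem' := by
    rintro a f ⟨c, hf⟩
    refine ⟨|a| * c, ?_⟩
    rw [abs_le_smul_iff_ae] at hf ⊢
    filter_upwards [hf, coeFn_smul a f] with x hx h
    simpa [h, abs_mul, mul_assoc] using mul_le_mul_of_nonneg_left hx (abs_nonneg a)

theorem mem_principalIdeal_self {e : Lp ℝ p μ} (he : 0 ≤ e) : e ∈ principalIdeal e :=
  ⟨1, by rw [one_smul, abs_of_nonneg he]⟩

theorem isSolid_principalIdeal (e : Lp ℝ p μ) : IsSolid (principalIdeal e : Set (Lp ℝ p μ)) :=
  fun _ ⟨c, hf⟩ _ hg => ⟨c, hg.trans hf⟩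

theorem map_mem_principalIdeal {𝓕 : Type*} [FunLike 𝓕 (Lp ℝ p μ) (Lp ℝ p μ)]
    [LinearMapClass 𝓕 ℝ (Lp ℝ p μ) (Lp ℝ p μ)] {S : 𝓕} (hS : ∀ f, 0 ≤ f → 0 ≤ S f)
    {e : Lp ℝ p μ} (hSe : S e = e) {f : Lp ℝ p μ} (hf : f ∈ principalIdeal e) :
    S f ∈ principalIdeal e := by
  obtain ⟨c, hc⟩ := hf
  exact ⟨c, calc
    |S f| ≤ S |f| := abs_map_le_map_abs_of_map_nonneg hS f
    _ ≤ S (c • e) := map_le_map_of_map_nonneg hS hc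
    _ = c • e := by rw [map_smul, hSe]⟩

theorem ae_restrict_eq_zero_of_mem_closure_principalIdeal [Fact (1 ≤ p)] {e f : Lp ℝ p μ}
    (hf : f ∈ (principalIdeal e).topologicalClosure) : f =ᵐ[μ.restrict {x | e x = 0}] 0 := by
  set A := {x | e x = 0}
  have hA : MeasurableSet A := (Lp.stronglyMeasurable e).measurable (measurableSet_singleton 0)
  set R := LpToLpRestrictCLM α ℝ ℝ μ p A
  have hker : ∀ g, R g = 0 ↔ g =ᵐ[μ.restrict A] 0 := fun g => by
    rw [Lp.eq_zero_iff_ae_eq_zero]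
    exact ⟨fun h => (LpToLpRestrictCLM_coeFn ℝ A g).symm.trans h,
      fun h => (LpToLpRestrictCLM_coeFn ℝ A g).trans h⟩
  have hle : principalIdeal e ≤ LinearMap.ker (R : Lp ℝ p μ →ₗ[ℝ] Lp ℝ p (μ.restrict A)) :=
    fun g ⟨c, hc⟩ => by
      rw [LinearMap.mem_ker, ContinuousLinearMap.coe_coe, hker, EventuallyEq, ae_restrict_iff' hA]
      filter_upwards [abs_le_smul_iff_ae.1 hc] with x hx hxA
      simpa [show e x = 0 from hxA] using hx
  exact (hker f).1 (Submodule.topologicalClosure_minimal _ hle R.isClosed_ker hf)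

theorem ae_pos_of_topologicalClosure_principalIdeal_eq_top [Fact (1 ≤ p)] [SigmaFinite μ]
    {e : Lp ℝ p μ} (he : 0 ≤ e) (htop : (principalIdeal e).topologicalClosure = ⊤) :
    ∀ᵐ x ∂μ, 0 < e x := by
  have hA : MeasurableSet {x | e x = 0} :=
    (Lp.stronglyMeasurable e).measurable (measurableSet_singleton 0)
  have hne : ∀ᵐ x ∂μ, e x ≠ 0 := by
    refine ae_of_forall_measure_lt_top_ae_restrict _ fun s hs hμs => ?_
    have h1 := ae_restrict_eq_zero_of_mem_closure_principalIdeal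
      (htop ▸ Submodule.mem_top : indicatorConstLp p hs hμs.ne (1 : ℝ) ∈ _)
    rw [EventuallyEq, ae_restrict_iff' hA] at h1
    rw [ae_restrict_iff' hs]
    filter_upwards [h1, indicatorConstLp_coeFn (hs := hs) (hμs := hμs.ne) (c := (1 : ℝ))]
      with x hx hind hxs hex
    have := hx hex
    rw [hind] at this
    simp [hxs] at this
  filter_upwards [hne, (coeFn_nonneg e).2 he] with x h1 h2 using h2.lt_of_ne' h1

theorem ae_pos_of_isLatticeIrreducible [Fact (1 ≤ p)] [SigmaFinite μ] {ι : Type*}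
    {S : ι → Lp ℝ p μ →L[ℝ] Lp ℝ p μ} (hS : ∀ i f, 0 ≤ f → 0 ≤ S i f)
    (hirr : IsLatticeIrreducible S) {e : Lp ℝ p μ} (hSe : ∀ i, S i e = e) (he : 0 ≤ e)
    (he0 : e ≠ 0) : ∀ᵐ x ∂μ, 0 < e x := by
  refine ae_pos_of_topologicalClosure_principalIdeal_eq_top he ?_
  set J := (principalIdeal e).topologicalClosure
  have hsolid : IsSolid (J : Set (Lp ℝ p μ)) := by
    rw [Submodule.topologicalClosure_coe]; exact (isSolid_principalIdeal e).closure
  have hinv : ∀ i, ∀ f ∈ J, S i f ∈ J := fun i f hf =>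
    map_mem_closure (S i).continuous hf fun _ => map_mem_principalIdeal (hS i) (hSe i)
  refine (hirr J (Submodule.isClosed_topologicalClosure _) hsolid hinv).resolve_left fun hbot => ?_
  exact he0 <| (Submodule.mem_bot ℝ).1 <|
    hbot ▸ Submodule.le_topologicalClosure _ (mem_principalIdeal_self he)

end MeasureTheory.Lp

namespace MeasureTheory.L1

variable {α : Type*} [MeasurableSpace α] {μ : Measure α}

theorem eq_zero_of_nonneg_of_integral_eq_zero {f : Lp ℝ 1 μ} (hf : 0 ≤ f)
    (h : ∫ x, f x ∂μ = 0) : f = 0 :=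
  Lp.eq_zero_iff_ae_eq_zero.2 <|
    (integral_eq_zero_iff_of_nonneg_ae ((Lp.coeFn_nonneg f).2 hf) (integrable_coeFn f)).1 h

theorem eq_of_le_of_integral_eq {f g : Lp ℝ 1 μ} (hfg : f ≤ g)
    (h : ∫ x, g x ∂μ = ∫ x, f x ∂μ) : g = f := by
  refine sub_eq_zero.1 (eq_zero_of_nonneg_of_integral_eq_zero (sub_nonneg.2 hfg) ?_)
  rw [← integral_eq_integral, integral_sub, integral_eq_integral, integral_eq_integral, h, sub_self]

section PositiveIntegralPreserving

variable {S : Lp ℝ 1 μ →L[ℝ] Lp ℝ 1 μ}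

theorem map_abs_eq_abs_of_map_eq (hS : ∀ f, 0 ≤ f → 0 ≤ S f)
    (hSint : ∀ f, ∫ x, S f x ∂μ = ∫ x, f x ∂μ) {f : Lp ℝ 1 μ} (hf : S f = f) : S |f| = |f| :=
  eq_of_le_of_integral_eq (by simpa only [hf] using abs_map_le_map_abs_of_map_nonneg hS f)
    (hSint _)

theorem map_posPart_eq_posPart_of_map_eq (hS : ∀ f, 0 ≤ f → 0 ≤ S f)
    (hSint : ∀ f, ∫ x, S f x ∂μ = ∫ x, f x ∂μ) {f : Lp ℝ 1 μ} (hf : S f = f) : S f⁺ = f⁺ :=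
  eq_of_le_of_integral_eq
    (sup_le (by simpa only [hf] using map_le_map_of_map_nonneg hS (le_posPart f))
      (hS _ (posPart_nonneg f)))
    (hSint _)

end PositiveIntegralPreserving

section Irreducible

variable [SigmaFinite μ] {ι : Type*} {S : ι → Lp ℝ 1 μ →L[ℝ] Lp ℝ 1 μ}

theorem nonneg_or_nonpos_of_forall_map_eq (hS : ∀ i f, 0 ≤ f → 0 ≤ S i f)
    (hSint : ∀ i f, ∫ x, S i f x ∂μ = ∫ x, f x ∂μ) (hirr : IsLatticeIrreducible S)
    {f : Lp ℝ 1 μ} (hf : ∀ i, S i f = f) : 0 ≤ f ∨ f ≤ 0 := by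
  by_cases h : f⁺ = 0
  · exact Or.inr (posPart_eq_zero.1 h)
  · have hpos := Lp.ae_pos_of_isLatticeIrreducible hS hirr
      (fun i => map_posPart_eq_posPart_of_map_eq (hS i) (hSint i) (hf i)) (posPart_nonneg f) h
    refine Or.inl ((Lp.coeFn_nonneg f).1 ?_)
    filter_upwards [hpos, Lp.coeFn_sup f 0, Lp.coeFn_zero ℝ 1 μ] with x hx hsup hzero
    rw [posPart_def, hsup, Pi.sup_apply, hzero] at hx
    exact ((lt_sup_iff.1 hx).resolve_right (lt_irrefl 0)).le

theorem exists_eq_smul_of_forall_map_eq (hS : ∀ i f, 0 ≤ f → 0 ≤ S i f)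
    (hSint : ∀ i f, ∫ x, S i f x ∂μ = ∫ x, f x ∂μ) (hirr : IsLatticeIrreducible S)
    {e f : Lp ℝ 1 μ} (he : 0 ≤ e) (he0 : e ≠ 0) (hSe : ∀ i, S i e = e) (hf : ∀ i, S i f = f) :
    ∃ c : ℝ, f = c • e := by
  have hint : ∫ x, e x ∂μ ≠ 0 := fun h => he0 (eq_zero_of_nonneg_of_integral_eq_zero he h)
  set c := (∫ x, f x ∂μ) / ∫ x, e x ∂μ
  have hg : ∀ i, S i (f - c • e) = f - c • e := fun i => by rw [map_sub, map_smul, hf, hSe]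
  have hgint : ∫ x, (f - c • e) x ∂μ = 0 := by
    rw [← integral_eq_integral, integral_sub, integral_smul, integral_eq_integral,
      integral_eq_integral, smul_eq_mul, div_mul_cancel₀ _ hint, sub_self]
  refine ⟨c, sub_eq_zero.1 ?_⟩
  rcases nonneg_or_nonpos_of_forall_map_eq hS hSint hirr hg with hnonneg | hnonpos
  · exact eq_zero_of_nonneg_of_integral_eq_zero hnonneg hgint
  · refine neg_eq_zero.1 (eq_zero_of_nonneg_of_integral_eq_zero (neg_nonneg.2 hnonpos) ?_)
    rw [← integral_eq_integral, integral_neg, integral_eq_integral, hgint, neg_zero]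

end Irreducible

end MeasureTheory.L1

theorem stmt_12_general {Ω : Type*} [MeasurableSpace Ω] (μ : Measure Ω) [SigmaFinite μ]
    (T : ℝ → (Lp ℝ 1 μ →L[ℝ] Lp ℝ 1 μ))
    (hpos : ∀ t, 0 ≤ t → ∀ f : Lp ℝ 1 μ, 0 ≤ f → 0 ≤ T t f)
    (hinv : ∀ t, 0 ≤ t → ∀ f : Lp ℝ 1 μ,
      ∫ x, (T t f : Ω → ℝ) x ∂μ = ∫ x, (f : Ω → ℝ) x ∂μ)
    (hirr : ∀ J : Submodule ℝ (Lp ℝ 1 μ), IsClosed (J : Set (Lp ℝ 1 μ)) →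
      (∀ f ∈ J, ∀ g : Lp ℝ 1 μ, |g| ≤ |f| → g ∈ J) →
      (∀ t, 0 ≤ t → ∀ f ∈ J, T t f ∈ J) → J = ⊥ ∨ J = ⊤)
    (hfix : ∃ f : Lp ℝ 1 μ, f ≠ 0 ∧ ∀ t, 0 ≤ t → T t f = f) :
    ∃ e : Lp ℝ 1 μ, (∀ t, 0 ≤ t → T t e = e) ∧
      (∀ᵐ x ∂μ, 0 < (e : Ω → ℝ) x) ∧
      ∀ h : Lp ℝ 1 μ, (∀ t, 0 ≤ t → T t h = h) → ∃ c : ℝ, h = c • e := by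
  let S : Ici (0 : ℝ) → Lp ℝ 1 μ →L[ℝ] Lp ℝ 1 μ := fun t => T t
  have hS : ∀ i f, 0 ≤ f → 0 ≤ S i f := fun i => hpos i i.2
  have hSint : ∀ i f, ∫ x, S i f x ∂μ = ∫ x, f x ∂μ := fun i => hinv i i.2
  have hSirr : IsLatticeIrreducible S := fun J hJ hsolid hJS =>
    hirr J hJ (fun _ hf _ hg => hsolid hf hg) fun t ht => hJS ⟨t, ht⟩
  have fixed_iff : ∀ f, (∀ t, 0 ≤ t → T t f = f) ↔ ∀ i, S i f = f := fun f =>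
    ⟨fun h i => h i i.2, fun h t ht => h ⟨t, ht⟩⟩
  obtain ⟨f, hf0, hf⟩ := hfix
  have he : ∀ i, S i |f| = |f| := fun i =>
    L1.map_abs_eq_abs_of_map_eq (hS i) (hSint i) ((fixed_iff f).1 hf i)
  have he0 : |f| ≠ 0 := by rwa [← norm_ne_zero_iff, norm_abs_eq_norm, norm_ne_zero_iff]
  refine ⟨|f|, (fixed_iff _).2 he,
    Lp.ae_pos_of_isLatticeIrreducible hS hSirr he (abs_nonneg f) he0, fun h hh => ?_⟩
  exact L1.exists_eq_smul_of_forall_map_eq hS hSint hSirr (abs_nonneg f) he0 he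
    ((fixed_iff h).1 hh)

theorem stmt_12 {Ω : Type*} [MeasurableSpace Ω] (μ : Measure Ω) [SigmaFinite μ]
    (T : ℝ → (Lp ℝ 1 μ →L[ℝ] Lp ℝ 1 μ))
    (hT0 : T 0 = ContinuousLinearMap.id ℝ (Lp ℝ 1 μ))
    (hsg : ∀ s t : ℝ, 0 ≤ s → 0 ≤ t → T (s + t) = (T s).comp (T t))
    (hpos : ∀ t, 0 ≤ t → ∀ f : Lp ℝ 1 μ, 0 ≤ f → 0 ≤ T t f)
    (hinv : ∀ t, 0 ≤ t → ∀ f : Lp ℝ 1 μ,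
      ∫ x, (T t f : Ω → ℝ) x ∂μ = ∫ x, (f : Ω → ℝ) x ∂μ)
    (hirr : ∀ J : Submodule ℝ (Lp ℝ 1 μ), IsClosed (J : Set (Lp ℝ 1 μ)) →
      (∀ f ∈ J, ∀ g : Lp ℝ 1 μ, |g| ≤ |f| → g ∈ J) →
      (∀ t, 0 ≤ t → ∀ f ∈ J, T t f ∈ J) → J = ⊥ ∨ J = ⊤)
    (hfix : ∃ f : Lp ℝ 1 μ, f ≠ 0 ∧ ∀ t, 0 ≤ t → T t f = f) :
    ∃ e : Lp ℝ 1 μ, (∀ t, 0 ≤ t → T t e = e) ∧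
      (∀ᵐ x ∂μ, 0 < (e : Ω → ℝ) x) ∧
      ∀ h : Lp ℝ 1 μ, (∀ t, 0 ≤ t → T t h = h) → ∃ c : ℝ, h = c • e :=
  stmt_12_general μ T hpos hinv hirr hfix
end

section
/- Under the hypotheses of the preceding uniform integrability statement: if (g_n) ⊂ B_b(Ω) is a uniformly bounded sequence with g_n(x) → 0 for μ-almost every x ∈ Ω, and (t_n) ⊂ [2τ, ∞) is any sequence, then (T(t_n)g_n)(x) → 0 for every x ∈ Ω. -/
/-!
Write `T(tₙ)gₙ(x) = ∫ kₙ gₙ dμ` with `kₙ = k_{tₙ,x}`. Testing the bound on `T(t)` against `1` bounds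
the masses `∫ kₙ dμ` by some `M`. Given `ε > 0`, uniform integrability yields `δ` with
`∫_A kₙ dμ < ε` whenever `μ A < δ`, and Egoroff's theorem a set `s` with `μ s < δ` off which
`gₙ → 0` uniformly. Splitting the integral over `s` and `sᶜ` gives, for large `n`,
`|T(tₙ)gₙ(x)| ≤ c ε + ε M`, where `c` bounds the `gₙ`.
-/

open MeasureTheory Filter Topology Set

lemma tendsto_zero_of_forall_eventually_abs_le_mul {ι : Type*} {l : Filter ι} {u : ι → ℝ} {C : ℝ}
    (h : ∀ ε > 0, ∀ᶠ i in l, |u i| ≤ C * ε) : Tendsto u l (𝓝 0) := by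
  rw [Metric.tendsto_nhds]
  intro ε hε
  filter_upwards [h (ε / (|C| + 1)) (by positivity)] with i hi
  rw [Real.dist_0_eq_abs]
  calc |u i| ≤ C * (ε / (|C| + 1)) := hi
    _ ≤ |C| * (ε / (|C| + 1)) := by gcongr; exact le_abs_self C
    _ < (|C| + 1) * (ε / (|C| + 1)) := by gcongr; linarith
    _ = ε := by field_simp

section KernelIntegral

variable {Ω : Type*} [MeasurableSpace Ω] {μ : Measure Ω}

lemma abs_integral_mul_le_of_abs_le_on_compl {k g : Ω → ℝ} {s : Set Ω} {c η : ℝ}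
    (hs : MeasurableSet s) (hk0 : ∀ᵐ y ∂μ, 0 ≤ k y) (hk : Integrable k μ)
    (hg : AEStronglyMeasurable g μ) (hc : ∀ y, |g y| ≤ c) (hη0 : 0 ≤ η)
    (hη : ∀ y ∈ sᶜ, |g y| ≤ η) :
    |∫ y, k y * g y ∂μ| ≤ c * ∫ y in s, k y ∂μ + η * ∫ y, k y ∂μ := by
  have hkg : Integrable (fun y => |k y * g y|) μ :=
    (hk.mul_bdd hg (c := c) (ae_of_all _ fun y => by simpa using hc y)).abs
  have hon_s : ∫ y in s, |k y * g y| ∂μ ≤ ∫ y in s, c * k y ∂μ := by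
    refine integral_mono_ae hkg.restrict (hk.restrict.const_mul c) ?_
    filter_upwards [ae_restrict_of_ae hk0] with y hy
    rw [abs_mul, abs_of_nonneg hy, mul_comm c]
    exact mul_le_mul_of_nonneg_left (hc y) hy
  have hon_compl : ∫ y in sᶜ, |k y * g y| ∂μ ≤ ∫ y in sᶜ, η * k y ∂μ := by
    refine setIntegral_mono_on_ae hkg.integrableOn (hk.const_mul η).integrableOn hs.compl ?_
    filter_upwards [hk0] with y hy hys
    rw [abs_mul, abs_of_nonneg hy, mul_comm η]
    exact mul_le_mul_of_nonneg_left (hη y hys) hy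
  have hk_compl : ∫ y in sᶜ, k y ∂μ ≤ ∫ y, k y ∂μ := setIntegral_le_integral hk hk0
  calc |∫ y, k y * g y ∂μ| ≤ ∫ y, |k y * g y| ∂μ := abs_integral_le_integral_abs
    _ = ∫ y in s, |k y * g y| ∂μ + ∫ y in sᶜ, |k y * g y| ∂μ :=
        (integral_add_compl hs hkg).symm
    _ ≤ c * ∫ y in s, k y ∂μ + η * ∫ y in sᶜ, k y ∂μ := by
        rw [← integral_const_mul, ← integral_const_mul]
        exact add_le_add hon_s hon_compl
    _ ≤ c * ∫ y in s, k y ∂μ + η * ∫ y, k y ∂μ := by gcongr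

theorem tendsto_integral_mul_of_uniformlyIntegrable [IsFiniteMeasure μ] {k g : ℕ → Ω → ℝ}
    {c M : ℝ} (hk0 : ∀ n, ∀ᵐ y ∂μ, 0 ≤ k n y) (hk : ∀ n, Integrable (k n) μ)
    (hmass : ∀ n, ∫ y, k n y ∂μ ≤ M)
    (hui : ∀ ε > (0 : ℝ), ∃ δ > (0 : ℝ), ∀ n, ∀ A : Set Ω, MeasurableSet A →
      μ A < ENNReal.ofReal δ → ∫ y in A, k n y ∂μ < ε)
    (hg : ∀ n, StronglyMeasurable (g n)) (hc0 : 0 ≤ c) (hc : ∀ n y, |g n y| ≤ c)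
    (hlim : ∀ᵐ y ∂μ, Tendsto (fun n => g n y) atTop (𝓝 0)) :
    Tendsto (fun n => ∫ y, k n y * g n y ∂μ) atTop (𝓝 0) := by
  refine tendsto_zero_of_forall_eventually_abs_le_mul (C := c + M) fun ε hε => ?_
  obtain ⟨δ, hδ, hsmall⟩ := hui ε hε
  obtain ⟨s, hs, hμs, hunif⟩ :=
    tendstoUniformlyOn_of_ae_tendsto' hg stronglyMeasurable_const hlim (half_pos hδ)
  have hμs' : μ s < ENNReal.ofReal δ :=
    hμs.trans_lt ((ENNReal.ofReal_lt_ofReal_iff hδ).2 (half_lt_self hδ))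
  filter_upwards [Metric.tendstoUniformlyOn_iff.1 hunif ε hε] with n hn
  have hη : ∀ y ∈ sᶜ, |g n y| ≤ ε := fun y hy => by
    simpa [Real.dist_eq] using (hn y hy).le
  calc |∫ y, k n y * g n y ∂μ|
      ≤ c * ∫ y in s, k n y ∂μ + ε * ∫ y, k n y ∂μ :=
        abs_integral_mul_le_of_abs_le_on_compl hs (hk0 n) (hk n) (hg n).aestronglyMeasurable
          (hc n) hε.le hη
    _ ≤ c * ε + ε * M := by
        gcongr
        exacts [(hsmall n s hs hμs').le, hmass n]
    _ = (c + M) * ε := by ring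

end KernelIntegral

theorem stmt_15_general {Ω : Type*}
    [MeasurableSpace Ω]
    (μ : Measure Ω) [IsFiniteMeasure μ]
    (T : ℝ → (Ω → ℝ) → (Ω → ℝ))
    (τ : ℝ) (hτ : 0 < τ)
    (hbdd : ∃ M : ℝ, ∀ t, τ ≤ t → ∀ f, Bb f → (∀ x, |f x| ≤ 1) → ∀ x, |T t f x| ≤ M)
    (K : ℝ → Ω → Ω → ℝ)
    (hK : ∀ t, 0 < t → ∀ x : Ω, (∀ᵐ y ∂μ, 0 ≤ K t x y) ∧ Integrable (K t x) μ ∧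
      ∀ f, Bb f → T t f x = ∫ y, K t x y * f y ∂μ)
    (hui : ∀ x : Ω, ∀ ε > (0 : ℝ), ∃ δ > (0 : ℝ), ∀ t, 2 * τ ≤ t →
      ∀ A : Set Ω, MeasurableSet A → μ A < ENNReal.ofReal δ →
        ∫ y in A, K t x y ∂μ < ε) :
    ∀ g : ℕ → Ω → ℝ, (∀ n, Bb (g n)) → (∃ c : ℝ, ∀ n x, |g n x| ≤ c) →
      (∀ᵐ x ∂μ, Tendsto (fun n => g n x) atTop (nhds 0)) →
      ∀ tn : ℕ → ℝ, (∀ n, 2 * τ ≤ tn n) →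
      ∀ x : Ω, Tendsto (fun n => T (tn n) (g n) x) atTop (nhds 0) := by
  intro g hgBb ⟨c, hc⟩ hlim tn htn x
  obtain ⟨M, hM⟩ := hbdd
  have htn_pos : ∀ n, 0 < tn n := fun n => by linarith [htn n]
  have hone : Bb (fun _ : Ω => (1 : ℝ)) := ⟨measurable_const, 1, fun _ => by norm_num⟩
  have hmass : ∀ n, ∫ y, K (tn n) x y ∂μ ≤ M := fun n => by
    have h := (hK _ (htn_pos n) x).2.2 _ hone
    simp only [mul_one] at h
    rw [← h]
    exact (le_abs_self _).trans (hM _ (by linarith [htn n]) _ hone (fun _ => by norm_num) x)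
  have key := tendsto_integral_mul_of_uniformlyIntegrable (fun n => (hK _ (htn_pos n) x).1)
    (fun n => (hK _ (htn_pos n) x).2.1) hmass
    (fun ε hε => let ⟨δ, hδ, h⟩ := hui x ε hε; ⟨δ, hδ, fun n => h _ (htn n)⟩)
    (fun n => (hgBb n).1.stronglyMeasurable) ((abs_nonneg _).trans (hc 0 x)) hc hlim
  exact key.congr fun n => ((hK _ (htn_pos n) x).2.2 _ (hgBb n)).symm

theorem stmt_15 {Ω : Type*} [TopologicalSpace Ω] [T2Space Ω] [SecondCountableTopology Ω]
    [MeasurableSpace Ω] [BorelSpace Ω]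
    (μ : Measure Ω) [IsFiniteMeasure μ]
    (hμpos : ∀ U : Set Ω, IsOpen U → U.Nonempty → 0 < μ U)
    (T : ℝ → (Ω → ℝ) → (Ω → ℝ))
    (hTBb : ∀ t, 0 ≤ t → ∀ f, Bb f → Bb (T t f))
    (hadd : ∀ t, 0 ≤ t → ∀ f g, Bb f → Bb g → T t (f + g) = T t f + T t g)
    (hsmul : ∀ t, 0 ≤ t → ∀ (c : ℝ) (f), Bb f → T t (c • f) = c • T t f)
    (hpos : ∀ t, 0 ≤ t → ∀ f, Bb f → (∀ x, 0 ≤ f x) → ∀ x, 0 ≤ T t f x)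
    (hT0 : ∀ f, Bb f → T 0 f = f)
    (hsg : ∀ s t : ℝ, 0 ≤ s → 0 ≤ t → ∀ f, Bb f → T (s + t) f = T s (T t f))
    (hSF : ∀ t, 0 < t → ∀ f, Bb f → Continuous (T t f))
    (hinv : ∀ t, 0 ≤ t → ∀ f, Bb f → ∫ x, T t f x ∂μ = ∫ x, f x ∂μ)
    (τ : ℝ) (hτ : 0 < τ)
    (hbdd : ∃ M : ℝ, ∀ t, τ ≤ t → ∀ f, Bb f → (∀ x, |f x| ≤ 1) → ∀ x, |T t f x| ≤ M)
    (K : ℝ → Ω → Ω → ℝ)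
    (hK : ∀ t, 0 < t → ∀ x : Ω, (∀ᵐ y ∂μ, 0 ≤ K t x y) ∧ Integrable (K t x) μ ∧
      ∀ f, Bb f → T t f x = ∫ y, K t x y * f y ∂μ)
    (hequi : ∀ c t : ℝ, 0 < c → 0 < t → ∀ x : Ω, ∀ ε > (0 : ℝ),
      ∃ U : Set Ω, IsOpen U ∧ x ∈ U ∧ ∀ y ∈ U, ∀ f, Bb f → (∀ z, |f z| ≤ c) →
        |T t f y - T t f x| < ε)
    (hui : ∀ x : Ω, ∀ ε > (0 : ℝ), ∃ δ > (0 : ℝ), ∀ t, 2 * τ ≤ t →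
      ∀ A : Set Ω, MeasurableSet A → μ A < ENNReal.ofReal δ →
        ∫ y in A, K t x y ∂μ < ε) :
    ∀ g : ℕ → Ω → ℝ, (∀ n, Bb (g n)) → (∃ c : ℝ, ∀ n x, |g n x| ≤ c) →
      (∀ᵐ x ∂μ, Tendsto (fun n => g n x) atTop (nhds 0)) →
      ∀ tn : ℕ → ℝ, (∀ n, 2 * τ ≤ tn n) →
      ∀ x : Ω, Tendsto (fun n => T (tn n) (g n) x) atTop (nhds 0) :=
  stmt_15_general μ T τ hτ hbdd K hK hui
end

section
/- Let (T(t))_{t≥0} denote the heat semigroup on ℝ, (T(t)f)(x) = (4πt)^{-1/2} ∫_ℝ e^{-(x−y)²/(4t)} f(y) dy. Then for all sufficiently large a ≥ 1, the function f_a := 𝟙_{⋃_{n=1}^∞ [a^n, 2a^n]} satisfies liminf_{t→∞} (T(t)f_a)(0) < limsup_{t→∞} (T(t)f_a)(0). In particular T(t)f_a(0) does not converge as t → ∞. -/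
open MeasureTheory Filter Topology Set

/-- The heat semigroup on the real line. -/
noncomputable def heat (t : ℝ) (f : ℝ → ℝ) (x : ℝ) : ℝ :=
  (4 * Real.pi * t) ^ (-(1 : ℝ) / 2) * ∫ y : ℝ, Real.exp (-(x - y) ^ 2 / (4 * t)) * f y

/-- The indicator of `⋃_{n ≥ 1} [aⁿ, 2aⁿ]`. -/
noncomputable def fa (a : ℝ) : ℝ → ℝ :=
  (⋃ n : ℕ, Set.Icc (a ^ (n + 1)) (2 * a ^ (n + 1))).indicator fun _ => (1 : ℝ)

/-!
Since `fₐ` is an indicator, `(T(t)fₐ)(0)` is `(4πt)^{-1/2}` times the Gaussian mass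
`∫ e^{-y²/4t}` of `⋃ [aⁿ, 2aⁿ]`. At `t = a^{2N+2}` the block `[a^{N+1}, 2a^{N+1}]` sits at the
Gaussian's scale `√t` and alone gives `(T(t)fₐ)(0) ≥ e⁻¹/√(4π)`. At `t = a^{2N+1}` the scale
`√t = a^{N+½}` falls in a gap: the blocks below it have total length at most `2aᴺ`, those above
start at `a^{N+1}`, where `e^{-y²/4t} ≤ 4t/y²` bounds their mass by `4aᴺ`; so
`(T(t)fₐ)(0) ≤ 6/√(4πa)`, which is smaller once `a ≥ 400`.
-/

open Real

lemma exp_neg_sq_div_eq_exp_neg_mul_sq (t y : ℝ) :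
    exp (-y ^ 2 / (4 * t)) = exp (-(4 * t)⁻¹ * y ^ 2) := by
  ring_nf

lemma integrable_exp_neg_sq_div {t : ℝ} (ht : 0 < t) :
    Integrable fun y : ℝ => exp (-y ^ 2 / (4 * t)) := by
  simpa only [exp_neg_sq_div_eq_exp_neg_mul_sq] using
    integrable_exp_neg_mul_sq (b := (4 * t)⁻¹) (by positivity)

lemma integral_exp_neg_sq_div {t : ℝ} (ht : 0 < t) :
    ∫ y : ℝ, exp (-y ^ 2 / (4 * t)) = √(4 * π * t) := by
  simp_rw [exp_neg_sq_div_eq_exp_neg_mul_sq, integral_gaussian]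
  congr 1
  field_simp

lemma heat_indicator_zero {t : ℝ} (ht : 0 ≤ t) {s : Set ℝ} (hs : MeasurableSet s) :
    heat t (s.indicator 1) 0 = (√(4 * π * t))⁻¹ * ∫ y in s, exp (-y ^ 2 / (4 * t)) := by
  have hpref : (4 * π * t) ^ (-(1 : ℝ) / 2) = (√(4 * π * t))⁻¹ := by
    rw [sqrt_eq_rpow, ← rpow_neg (by positivity)]
    norm_num
  have hintegrand : (fun y => exp (-(0 - y) ^ 2 / (4 * t)) * s.indicator 1 y)
      = s.indicator fun y => exp (-y ^ 2 / (4 * t)) := by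
    funext y
    by_cases hy : y ∈ s <;> simp [hy]
  rw [heat, hpref, hintegrand, integral_indicator hs]

lemma heat_indicator_zero_nonneg {t : ℝ} (ht : 0 ≤ t) {s : Set ℝ} (hs : MeasurableSet s) :
    0 ≤ heat t (s.indicator 1) 0 := by
  rw [heat_indicator_zero ht hs]
  exact mul_nonneg (by positivity) (setIntegral_nonneg hs fun _ _ => (exp_pos _).le)

lemma heat_indicator_zero_le_one {t : ℝ} (ht : 0 < t) {s : Set ℝ} (hs : MeasurableSet s) :
    heat t (s.indicator 1) 0 ≤ 1 := by
  rw [heat_indicator_zero ht.le hs]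
  have hmass : ∫ y in s, exp (-y ^ 2 / (4 * t)) ≤ √(4 * π * t) :=
    integral_exp_neg_sq_div ht ▸ setIntegral_le_integral (integrable_exp_neg_sq_div ht)
      (ae_of_all _ fun _ => (exp_pos _).le)
  calc (√(4 * π * t))⁻¹ * ∫ y in s, exp (-y ^ 2 / (4 * t))
      ≤ (√(4 * π * t))⁻¹ * √(4 * π * t) := by gcongr
    _ = 1 := inv_mul_cancel₀ (by positivity)

lemma setIntegral_Icc_exp_neg_sq_div_ge {A : ℝ} (hA : 0 < A) :
    A * exp (-1) ≤ ∫ y in Icc A (2 * A), exp (-y ^ 2 / (4 * A ^ 2)) := by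
  have hbound : ∀ y ∈ Icc A (2 * A), exp (-1) ≤ exp (-y ^ 2 / (4 * A ^ 2)) := by
    rintro y ⟨hAy, hy⟩
    gcongr
    rw [le_div_iff₀ (by positivity)]
    nlinarith
  have h := setIntegral_ge_of_const_le_real measurableSet_Icc measure_Icc_lt_top.ne hbound
    (integrable_exp_neg_sq_div (by positivity)).integrableOn
  rwa [Real.volume_real_Icc_of_le (by linarith), show 2 * A - A = A by ring, mul_comm] at h

lemma setIntegral_Ioi_exp_neg_sq_div_le {t A : ℝ} (ht : 0 < t) (hA : 0 < A) :
    ∫ y in Ioi A, exp (-y ^ 2 / (4 * t)) ≤ 4 * t / A := by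
  have hbound : ∀ y ∈ Ioi A, exp (-y ^ 2 / (4 * t)) ≤ 4 * t * y ^ (-2 : ℝ) := by
    intro y hy
    have hu : 0 < y ^ 2 / (4 * t) := by have := hA.trans hy; positivity
    have hy' : 4 * t * y ^ (-2 : ℝ) = (y ^ 2 / (4 * t))⁻¹ := by
      rw [rpow_neg (hA.trans hy).le, inv_div, div_eq_mul_inv]
      norm_cast
    rw [hy', neg_div, exp_neg]
    exact inv_anti₀ hu (by linarith [add_one_le_exp (y ^ 2 / (4 * t))])
  calc ∫ y in Ioi A, exp (-y ^ 2 / (4 * t))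
      ≤ ∫ y in Ioi A, 4 * t * y ^ (-2 : ℝ) :=
        setIntegral_mono_on (integrable_exp_neg_sq_div ht).integrableOn
          ((integrableOn_Ioi_rpow_of_lt (by norm_num) hA).const_mul _) measurableSet_Ioi hbound
    _ = 4 * t / A := by
        rw [integral_const_mul, integral_Ioi_rpow_of_lt (by norm_num) hA]
        norm_num [rpow_neg_one, div_eq_mul_inv]

lemma setIntegral_exp_neg_sq_div_le_of_subset {t L A : ℝ} (ht : 0 < t) (hL : 0 ≤ L)
    (hA : 0 < A) {s : Set ℝ} (hsub : s ⊆ Icc 0 L ∪ Ici A) :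
    ∫ y in s, exp (-y ^ 2 / (4 * t)) ≤ L + 4 * t / A := by
  have hg := integrable_exp_neg_sq_div ht
  have hg0 : ∀ y : ℝ, 0 ≤ exp (-y ^ 2 / (4 * t)) := fun _ => (exp_pos _).le
  rw [← integral_inter_add_sdiff measurableSet_Icc hg.integrableOn]
  gcongr ?_ + ?_
  · calc ∫ y in s ∩ Icc 0 L, exp (-y ^ 2 / (4 * t))
        ≤ ∫ y in Icc 0 L, exp (-y ^ 2 / (4 * t)) :=
          setIntegral_mono_set hg.integrableOn (ae_of_all _ hg0)
            (LE.le.eventuallyLE inter_subset_right)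
      _ ≤ ∫ _ in Icc 0 L, (1 : ℝ) :=
          setIntegral_mono_on hg.integrableOn (integrableOn_const measure_Icc_lt_top.ne)
            measurableSet_Icc fun y _ => exp_le_one_iff.2
              (div_nonpos_of_nonpos_of_nonneg (neg_nonpos.2 (sq_nonneg y)) (by positivity))
      _ = L := by simp [hL]
  · calc ∫ y in s \ Icc 0 L, exp (-y ^ 2 / (4 * t))
        ≤ ∫ y in Ici A, exp (-y ^ 2 / (4 * t)) :=
          setIntegral_mono_set hg.integrableOn (ae_of_all _ hg0)
            (LE.le.eventuallyLE fun y hy => (hsub hy.1).resolve_left hy.2)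
      _ = ∫ y in Ioi A, exp (-y ^ 2 / (4 * t)) := integral_Ici_eq_integral_Ioi
      _ ≤ 4 * t / A := setIntegral_Ioi_exp_neg_sq_div_le ht hA

lemma heat_indicator_zero_le {a B : ℝ} (ha : 0 < a) (hB : 0 < B) {s : Set ℝ}
    (hs : MeasurableSet s) (hsub : s ⊆ Icc 0 (2 * B) ∪ Ici (a * B)) :
    heat (a * B ^ 2) (s.indicator 1) 0 ≤ 6 / √(4 * π * a) := by
  have ht : 0 < a * B ^ 2 := by positivity
  have hmass := setIntegral_exp_neg_sq_div_le_of_subset ht (by positivity) (by positivity) hsub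
  have hsqrt : √(4 * π * (a * B ^ 2)) = √(4 * π * a) * B := by
    rw [← mul_assoc, sqrt_mul (by positivity), sqrt_sq hB.le]
  rw [heat_indicator_zero ht.le hs]
  calc (√(4 * π * (a * B ^ 2)))⁻¹ * ∫ y in s, exp (-y ^ 2 / (4 * (a * B ^ 2)))
      ≤ (√(4 * π * (a * B ^ 2)))⁻¹ * (2 * B + 4 * (a * B ^ 2) / (a * B)) := by gcongr
    _ = 6 / √(4 * π * a) := by
        rw [hsqrt]
        field_simp
        ring

lemma heat_indicator_zero_ge {A : ℝ} (hA : 0 < A) {s : Set ℝ} (hs : MeasurableSet s)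
    (hsub : Icc A (2 * A) ⊆ s) :
    exp (-1) / √(4 * π) ≤ heat (A ^ 2) (s.indicator 1) 0 := by
  have hsqrt : √(4 * π * A ^ 2) = √(4 * π) * A := by
    rw [sqrt_mul (by positivity), sqrt_sq hA.le]
  have hmass : A * exp (-1) ≤ ∫ y in s, exp (-y ^ 2 / (4 * A ^ 2)) :=
    (setIntegral_Icc_exp_neg_sq_div_ge hA).trans <|
      setIntegral_mono_set (integrable_exp_neg_sq_div (by positivity)).integrableOn
        (ae_of_all _ fun _ => (exp_pos _).le) (LE.le.eventuallyLE hsub)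
  rw [heat_indicator_zero (sq_nonneg A) hs]
  calc exp (-1) / √(4 * π) = (√(4 * π * A ^ 2))⁻¹ * (A * exp (-1)) := by
        rw [hsqrt]
        field_simp
    _ ≤ _ := by gcongr

lemma iUnion_Icc_pow_subset {a : ℝ} (ha : 1 ≤ a) (N : ℕ) :
    ⋃ n : ℕ, Icc (a ^ (n + 1)) (2 * a ^ (n + 1)) ⊆ Icc 0 (2 * a ^ N) ∪ Ici (a * a ^ N) := by
  refine iUnion_subset fun n y hy => ?_
  rcases Nat.lt_or_ge n N with h | h
  · refine Or.inl ⟨(by positivity : (0 : ℝ) ≤ a ^ (n + 1)).trans hy.1, hy.2.trans ?_⟩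
    gcongr 2 * ?_
    exact pow_le_pow_right₀ ha h
  · refine Or.inr (le_trans ?_ hy.1)
    rw [← pow_succ']
    exact pow_le_pow_right₀ ha (by omega)

theorem stmt_16 :
    ∃ a₀ : ℝ, 1 ≤ a₀ ∧ ∀ a : ℝ, a₀ ≤ a →
      liminf (fun t : ℝ => heat t (fa a) 0) atTop
        < limsup (fun t : ℝ => heat t (fa a) 0) atTop := by
  refine ⟨400, by norm_num, fun a ha => ?_⟩
  have ha0 : 0 < a := by linarith
  have hU : MeasurableSet (⋃ n : ℕ, Icc (a ^ (n + 1)) (2 * a ^ (n + 1))) :=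
    .iUnion fun _ => measurableSet_Icc
  have hpow : Tendsto (fun N : ℕ => (a ^ N) ^ 2) atTop atTop :=
    (tendsto_pow_atTop two_ne_zero).comp (tendsto_pow_atTop_atTop_of_one_lt (by linarith))
  have hup : ∃ᶠ t in atTop, heat t (fa a) 0 ≤ 6 / √(4 * π * a) :=
    (hpow.const_mul_atTop ha0).frequently <| .of_forall fun N =>
      heat_indicator_zero_le ha0 (by positivity) hU (iUnion_Icc_pow_subset (by linarith) N)
  have hlow : ∃ᶠ t in atTop, exp (-1) / √(4 * π) ≤ heat t (fa a) 0 :=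
    (hpow.comp (tendsto_add_atTop_nat 1)).frequently <| .of_forall fun N =>
      heat_indicator_zero_ge (by positivity) hU (subset_iUnion_of_subset N subset_rfl)
  have hbdd : ∀ᶠ t in atTop, 0 ≤ heat t (fa a) 0 ∧ heat t (fa a) 0 ≤ 1 :=
    (eventually_gt_atTop 0).mono fun t ht =>
      ⟨heat_indicator_zero_nonneg ht.le hU, heat_indicator_zero_le_one ht hU⟩
  have hgap : 6 / √(4 * π * a) < exp (-1) / √(4 * π) := by
    have hsqrt : 20 ≤ √a := le_sqrt_of_sq_le (by linarith)
    rw [sqrt_mul (by positivity), div_mul_eq_div_div_swap,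
      div_lt_div_iff_of_pos_right (by positivity)]
    calc 6 / √a ≤ 6 / 20 := by gcongr
      _ < exp (-1) := lt_trans (by norm_num) exp_neg_one_gt_d9
  calc liminf (fun t : ℝ => heat t (fa a) 0) atTop
      ≤ 6 / √(4 * π * a) :=
        liminf_le_of_frequently_le hup (isBoundedUnder_of_eventually_ge (hbdd.mono fun _ h => h.1))
    _ < exp (-1) / √(4 * π) := hgap
    _ ≤ limsup (fun t : ℝ => heat t (fa a) 0) atTop :=
        le_limsup_of_frequently_le hlow (isBoundedUnder_of_eventually_le (hbdd.mono fun _ h => h.2))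
end
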